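/- For every p ≥ 3 and k ≥ 0, the spectral radius of the lollipop L(p,k) is strictly less than √5. -/
import Mathlib


open Polynomial

/-- The characteristic polynomial (over `ℝ`) of the adjacency matrix of a finite graph. -/
noncomputable def graphCharpoly {V : Type*} [Fintype V] [DecidableEq V]
    (G : SimpleGraph V) : Polynomial ℝ :=
  letI := Classical.decRel G.Adj
  (G.adjMatrix ℝ).charpoly

/-- `Q_{P_n}`: the characteristic polynomial of the path on `n` vertices. -/
noncomputable def Qpath (n : ℕ) : Polynomial ℝ := graphCharpoly (SimpleGraph.pathGraph n)

/-- `Q_{C_n}`: the characteristic polynomial of the cycle on `n` vertices. -/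
noncomputable def Qcycle (n : ℕ) : Polynomial ℝ := graphCharpoly (SimpleGraph.cycleGraph n)

/-- The lollipop `L(p,k)`: a cycle on `p` vertices with a path of `k` further
vertices attached to one cycle vertex. -/
def lollipop (p k : ℕ) : SimpleGraph (Fin p ⊕ Fin k) :=
  SimpleGraph.fromRel (fun a b =>
    match a, b with
    | Sum.inl i, Sum.inl j => ((i : ℕ) + 1) % p = (j : ℕ)
    | Sum.inl i, Sum.inr j => (i : ℕ) = 0 ∧ (j : ℕ) = 0
    | Sum.inr i, Sum.inr j => (i : ℕ) + 1 = (j : ℕ)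
    | _, _ => False)

/-- The adjacency matrix (over `ℝ`) of a finite graph. -/
noncomputable def adjMat {V : Type*} [Fintype V] [DecidableEq V]
    (G : SimpleGraph V) : Matrix V V ℝ :=
  letI := Classical.decRel G.Adj
  G.adjMatrix ℝ

open Matrix
open scoped Classical

lemma eig_lt_of_subinvariant {V : Type*} [Fintype V] [Nonempty V]
    (A : Matrix V V ℝ) (hnn : ∀ v u, 0 ≤ A v u)
    (w : V → ℝ) (hw : ∀ v, 0 < w v) (r : ℝ)
    (hsub : ∀ v, (A *ᵥ w) v < r * w v)
    (μ : ℝ) (x : V → ℝ) (hx : x ≠ 0) (hAx : A *ᵥ x = μ • x) : μ < r := by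
  obtain ⟨v, hv⟩ := Finite.exists_max (fun v => |x v| / w v)
  have hxv : 0 < |x v| := by
    obtain ⟨u, hu⟩ := Function.ne_iff.mp hx
    have h1 : 0 < |x u| / w u := div_pos (abs_pos.mpr hu) (hw u)
    have h2 : 0 < |x v| / w v := lt_of_lt_of_le h1 (hv u)
    by_contra h
    push_neg at h
    have : |x v| = 0 := le_antisymm h (abs_nonneg _)
    rw [this, zero_div] at h2
    exact lt_irrefl _ h2
  set R := |x v| / w v with hR
  have hRpos : 0 < R := div_pos hxv (hw v)
  have key : ∀ u, |x u| ≤ R * w u := by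
    intro u
    have := hv u
    calc |x u| = |x u| / w u * w u := by rw [div_mul_cancel₀]; exact (hw u).ne'
    _ ≤ R * w u := by
        apply mul_le_mul_of_nonneg_right this (hw u).le
  have h1 : μ * x v = ∑ u, A v u * x u := by
    have := congrFun hAx v
    simp only [Matrix.mulVec, dotProduct, Pi.smul_apply, smul_eq_mul] at this
    exact this.symm
  have h2 : |μ| * |x v| ≤ ∑ u, A v u * (R * w u) := by
    rw [← abs_mul, h1]
    refine le_trans (Finset.abs_sum_le_sum_abs _ _) ?_
    apply Finset.sum_le_sum
    intro u _
    rw [abs_mul, abs_of_nonneg (hnn v u)]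
    exact mul_le_mul_of_nonneg_left (key u) (hnn v u)
  have h3 : (∑ u, A v u * (R * w u)) = R * (A *ᵥ w) v := by
    simp only [Matrix.mulVec, dotProduct]
    rw [Finset.mul_sum]
    congr 1; ext u; ring
  have h4 : R * (A *ᵥ w) v < R * (r * w v) :=
    mul_lt_mul_of_pos_left (hsub v) hRpos
  have h5 : R * (r * w v) = r * |x v| := by
    calc R * (r * w v) = r * (R * w v) := by ring
    _ = r * |x v| := by rw [hR, div_mul_cancel₀ _ (hw v).ne']
  have h6 : |μ| * |x v| < r * |x v| := by
    calc |μ| * |x v| ≤ R * (A *ᵥ w) v := h2.trans (le_of_eq h3)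
    _ < R * (r * w v) := h4
    _ = r * |x v| := h5
  have := lt_of_mul_lt_mul_right h6 (abs_nonneg (x v))
  exact lt_of_le_of_lt (le_abs_self μ) this

lemma adjMat_mulVec {V : Type*} [Fintype V] [DecidableEq V] (G : SimpleGraph V)
    (w : V → ℝ) (v : V) :
    (adjMat G *ᵥ w) v = ∑ u, if G.Adj v u then w u else 0 := by
  classical
  unfold adjMat
  simp only [Matrix.mulVec, dotProduct]
  apply Finset.sum_congr rfl
  intro u _
  by_cases h : G.Adj v u <;> simp [h]

lemma lollipop_adj_ll {p k : ℕ} (hp : 3 ≤ p) (i j : Fin p) :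
    (lollipop p k).Adj (Sum.inl i) (Sum.inl j) ↔
      (((i : ℕ) + 1) % p = (j : ℕ) ∨ ((j : ℕ) + 1) % p = (i : ℕ)) := by
  have hi := i.isLt; have hj := j.isLt
  simp only [lollipop, SimpleGraph.fromRel_adj]
  constructor
  · rintro ⟨-, h⟩; exact h
  · intro h
    refine ⟨?_, h⟩
    intro hij
    have hij' : i = j := by injection hij
    subst hij'
    have h' : ((i : ℕ) + 1) % p = (i : ℕ) := by rcases h with h | h <;> exact h
    rcases Nat.lt_or_ge ((i : ℕ) + 1) p with hlt | hge
    · rw [Nat.mod_eq_of_lt hlt] at h'; omega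
    · have he : (i : ℕ) + 1 = p := by omega
      rw [he, Nat.mod_self] at h'; omega

lemma lollipop_adj_lr {p k : ℕ} (i : Fin p) (j : Fin k) :
    (lollipop p k).Adj (Sum.inl i) (Sum.inr j) ↔ ((i : ℕ) = 0 ∧ (j : ℕ) = 0) := by
  simp only [lollipop, SimpleGraph.fromRel_adj]
  constructor
  · rintro ⟨-, h | h⟩
    · exact h
    · exact absurd h not_false
  · intro h
    exact ⟨by simp, Or.inl h⟩

lemma lollipop_adj_rl {p k : ℕ} (i : Fin p) (j : Fin k) :
    (lollipop p k).Adj (Sum.inr j) (Sum.inl i) ↔ ((i : ℕ) = 0 ∧ (j : ℕ) = 0) := by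
  rw [SimpleGraph.adj_comm]; exact lollipop_adj_lr i j

lemma lollipop_adj_rr {p k : ℕ} (j j' : Fin k) :
    (lollipop p k).Adj (Sum.inr j) (Sum.inr j') ↔
      ((j : ℕ) + 1 = (j' : ℕ) ∨ ((j' : ℕ) + 1 = (j : ℕ))) := by
  simp only [lollipop, SimpleGraph.fromRel_adj]
  constructor
  · rintro ⟨-, h⟩; exact h
  · intro h
    refine ⟨?_, h⟩
    intro hjj
    have : j = j' := by injection hjj
    subst this
    omega

lemma sum_ite_val {k : ℕ} (m : ℕ) (f : Fin k → ℝ) :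
    (∑ x : Fin k, if (x : ℕ) = m then f x else 0)
      = if h : m < k then f ⟨m, h⟩ else 0 := by
  split_ifs with h
  · rw [Finset.sum_eq_single (⟨m, h⟩ : Fin k)]
    · simp
    · intro b _ hb
      rw [if_neg]
      intro hbm
      exact hb (Fin.ext hbm)
    · intro habs; exact absurd (Finset.mem_univ _) habs
  · apply Finset.sum_eq_zero
    intro x _
    rw [if_neg]
    have := x.isLt
    omega

lemma lollipop_subinvariant (p k : ℕ) (hp : 3 ≤ p) :
    ∃ w : Fin p ⊕ Fin k → ℝ, (∀ v, 0 < w v) ∧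
      ∀ v, ((adjMat (lollipop p k)) *ᵥ w) v < Real.sqrt 5 * w v := by
  set σ := Real.sqrt 5 with hσdef
  have hσ : σ * σ = 5 := Real.mul_self_sqrt (by norm_num)
  have hσnn : 0 ≤ σ := Real.sqrt_nonneg 5
  have hσ2 : 2 < σ := by nlinarith
  have hσ3 : σ < 7/3 := by nlinarith
  clear_value σ
  clear hσdef
  set φ := (1 + σ) / 2 with hφdef
  set ψ := (σ - 1) / 2 with hψdef
  clear_value φ ψ
  have hψpos : 0 < ψ := by rw [hψdef]; linarith
  have hψ1 : ψ < 1 := by rw [hψdef]; linarith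
  have hφ1 : 1 < φ := by rw [hφdef]; linarith
  have hφψ : φ * ψ = 1 := by rw [hφdef, hψdef]; linear_combination (1/4 : ℝ) * hσ
  have hφ2 : φ ^ 2 + 1 = σ * φ := by
    rw [hφdef]; linear_combination (-1/4 : ℝ) * hσ
  have hψ2 : ψ ^ 2 + 1 = σ * ψ := by
    rw [hψdef]; linear_combination (-1/4 : ℝ) * hσ
  set c := ψ ^ (k + 2) with hcdef
  clear_value c
  have hcpos : 0 < c := by rw [hcdef]; exact pow_pos hψpos _
  set s : ℕ → ℝ := fun m => φ ^ m - ψ ^ m + c with hsdef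
  clear_value s
  have hspos : ∀ m, 0 < s m := by
    intro m
    have h1 : ψ ^ m ≤ φ ^ m := pow_le_pow_left₀ hψpos.le (by linarith) m
    rw [hsdef]
    simp only
    linarith
  have hpath : ∀ m : ℕ, s (m + 2) + s m < σ * s (m + 1) := by
    intro m
    have hrec : s (m + 2) + s m = σ * s (m + 1) - (σ - 2) * c := by
      rw [hsdef]
      simp only
      linear_combination φ ^ m * hφ2 - ψ ^ m * hψ2
    have h2 : 0 < (σ - 2) * c := mul_pos (by linarith) hcpos
    linarith
  set t := s (k + 1) with htdef
  clear_value t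
  have htpos : 0 < t := htdef ▸ hspos _
  have hskpos : 0 < s k := hspos _
  have hstep : ψ * t - s k = ψ ^ k * (1 - ψ ^ 2) - (1 - ψ) * ψ ^ (k + 2) := by
    rw [htdef, hsdef, hcdef]
    simp only
    linear_combination φ ^ k * hφψ
  have hkey : 0 < ψ * t - s k := by
    rw [hstep]
    have hψk : 0 < ψ ^ k := pow_pos hψpos k
    have hfac : (1 - ψ) * ψ ^ 2 < 1 - ψ ^ 2 := by nlinarith
    have h1 : ψ ^ (k + 2) = ψ ^ k * ψ ^ 2 := by ring
    rw [h1]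
    have h2 : (1 - ψ) * (ψ ^ k * ψ ^ 2) < ψ ^ k * (1 - ψ ^ 2) := by
      calc (1 - ψ) * (ψ ^ k * ψ ^ 2) = ψ ^ k * ((1 - ψ) * ψ ^ 2) := by ring
      _ < ψ ^ k * (1 - ψ ^ 2) := mul_lt_mul_of_pos_left hfac hψk
    linarith
  have hkey' : 0 < σ * t / 2 - t / 2 - s k := by
    have : ψ * t = σ * t / 2 - t / 2 := by rw [hψdef]; ring
    linarith [hkey, this.symm.le, this.le]
  set a := (φ * t + σ * t - s k) / 4 with hadef
  clear_value a
  have h4a : 4 * a = t / 2 + 3 * (σ * t) / 2 - s k := by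
    rw [hadef, hφdef]; ring
  have h5t : σ * (σ * t) = 5 * t := by
    calc σ * (σ * t) = (σ * σ) * t := by ring
    _ = 5 * t := by rw [hσ]
  have h5sk : σ * (σ * s k) = 5 * s k := by
    calc σ * (σ * s k) = (σ * σ) * s k := by ring
    _ = 5 * s k := by rw [hσ]
  have hσa : 4 * (σ * a) = σ * t / 2 + 15 * t / 2 - σ * s k := by
    rw [hadef, hφdef]
    have expand : 4 * (σ * ((((1 + σ) / 2) * t + σ * t - s k) / 4))
        = σ * t / 2 + (σ * (σ * t)) * (3/2) - σ * s k := by ring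
    rw [expand, h5t]; ring
  have hD : 2 * a + s k < σ * t := by linarith [hkey', h4a]
  have hapos : 0 < a := by linarith [hkey', h4a, htpos, hskpos]
  have h7 : 3 * (σ * t) < 7 * t := by nlinarith [htpos, hσ3]
  have halt : a < t := by linarith [h4a, h7, hskpos]
  have hB : t + a < σ * a := by
    have h1 : 0 < σ * (σ * t) / 2 - σ * t + t / 2 - σ * s k + s k := by
      have e : σ * (σ * t) / 2 - σ * t + t / 2 - σ * s k + s k
          = (σ - 1) * (σ * t / 2 - t / 2 - s k) + (σ * t / 2 - t/2 - s k)*0 := by ring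
      rw [e]
      have := mul_pos (show (0:ℝ) < σ - 1 by linarith) hkey'
      linarith
    rw [h5t] at h1
    linarith [h4a, hσa, h1]
  refine ⟨Sum.elim (fun i : Fin p => if (i : ℕ) = 0 then t else a)
      (fun j : Fin k => s (k - (j : ℕ))), ?_, ?_⟩
  · rintro (i | j)
    · simp only [Sum.elim_inl]
      split_ifs
      · exact htpos
      · exact hapos
    · simp only [Sum.elim_inr]
      exact hspos _
  · intro v
    rw [adjMat_mulVec, Fintype.sum_sum_type]
    rcases v with i | j
    · -- cycle vertex
      have hi := i.isLt
      have hp0 : 0 < p := by omega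
      simp only [Sum.elim_inl, Sum.elim_inr]
      obtain ⟨n1, hn1v⟩ : ∃ n1 : Fin p, (n1 : ℕ) = ((i : ℕ) + 1) % p :=
        ⟨⟨_, Nat.mod_lt _ hp0⟩, rfl⟩
      obtain ⟨n2, hn2v⟩ : ∃ n2 : Fin p, (n2 : ℕ) = ((i : ℕ) + (p - 1)) % p :=
        ⟨⟨_, Nat.mod_lt _ hp0⟩, rfl⟩
      have hn1val : (n1 : ℕ) = if (i : ℕ) + 1 = p then 0 else (i : ℕ) + 1 := by
        rw [hn1v]
        split_ifs with h
        · rw [h, Nat.mod_self]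
        · exact Nat.mod_eq_of_lt (by omega)
      have hn2val : (n2 : ℕ) = if (i : ℕ) = 0 then p - 1 else (i : ℕ) - 1 := by
        rw [hn2v]
        split_ifs with h
        · rw [h]
          simp only [Nat.zero_add]
          exact Nat.mod_eq_of_lt (by omega)
        · rw [show (i : ℕ) + (p - 1) = p + ((i : ℕ) - 1) by omega, Nat.add_mod_left]
          exact Nat.mod_eq_of_lt (by omega)
      have hne12 : n1 ≠ n2 := by
        intro h
        rw [Fin.ext_iff, hn1val, hn2val] at h
        split_ifs at h <;> omega
      have hadj : ∀ j : Fin p,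
          ((lollipop p k).Adj (Sum.inl i) (Sum.inl j)) ↔ (j = n1 ∨ j = n2) := by
        intro j
        rw [lollipop_adj_ll hp]
        have hj := j.isLt
        have hmodj : ((j : ℕ) + 1) % p = if (j : ℕ) + 1 = p then 0 else (j : ℕ) + 1 := by
          split_ifs with h
          · rw [h, Nat.mod_self]
          · exact Nat.mod_eq_of_lt (by omega)
        have hmodi : ((i : ℕ) + 1) % p = if (i : ℕ) + 1 = p then 0 else (i : ℕ) + 1 := by
          split_ifs with h
          · rw [h, Nat.mod_self]
          · exact Nat.mod_eq_of_lt (by omega)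
        simp only [Fin.ext_iff]
        rw [hn1val, hn2val, hmodj, hmodi]
        split_ifs <;> omega
      have hsumL : (∑ j : Fin p, if (lollipop p k).Adj (Sum.inl i) (Sum.inl j)
            then (if (j : ℕ) = 0 then t else a) else 0)
          = (if (n1 : ℕ) = 0 then t else a) + (if (n2 : ℕ) = 0 then t else a) := by
        have hpt : ∀ j : Fin p, (if (lollipop p k).Adj (Sum.inl i) (Sum.inl j)
              then (if (j : ℕ) = 0 then t else a) else 0)
            = (if j = n1 then (if (j : ℕ) = 0 then t else a) else 0)
              + (if j = n2 then (if (j : ℕ) = 0 then t else a) else 0) := by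
          intro j
          rw [if_congr (hadj j) rfl rfl]
          by_cases h1 : j = n1 <;> by_cases h2 : j = n2
          · exact absurd (h1.symm.trans h2) hne12
          · subst h1
            rw [if_pos (Or.inl rfl), if_pos rfl, if_neg h2, add_zero]
          · subst h2
            rw [if_pos (Or.inr rfl), if_neg h1, if_pos rfl, zero_add]
          · rw [if_neg (by tauto), if_neg h1, if_neg h2, add_zero]
        rw [Finset.sum_congr rfl (fun j _ => hpt j), Finset.sum_add_distrib,
            Finset.sum_ite_eq' Finset.univ n1, Finset.sum_ite_eq' Finset.univ n2]
        simp
      by_cases hi0 : (i : ℕ) = 0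
      · have hcross : (∑ j : Fin k, if (lollipop p k).Adj (Sum.inl i) (Sum.inr j)
              then s (k - (j : ℕ)) else 0) = if h : 0 < k then s (k - 0) else 0 := by
          have hpt : ∀ j : Fin k, (if (lollipop p k).Adj (Sum.inl i) (Sum.inr j)
                then s (k - (j : ℕ)) else 0)
              = (if (j : ℕ) = 0 then s (k - (j : ℕ)) else 0) := by
            intro j
            refine if_congr ?_ rfl rfl
            rw [lollipop_adj_lr]
            simp [hi0]
          rw [Finset.sum_congr rfl (fun j _ => hpt j),
            sum_ite_val 0 (fun j : Fin k => s (k - (j : ℕ)))]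
        have hv1 : ¬ ((n1 : ℕ) = 0) := by
          intro h; rw [hn1val] at h; split_ifs at h <;> omega
        have hv2 : ¬ ((n2 : ℕ) = 0) := by
          intro h; rw [hn2val] at h; split_ifs at h <;> omega
        rw [hsumL, hcross, if_neg hv1, if_neg hv2, if_pos hi0]
        have hd : (if h : 0 < k then s (k - 0) else 0) ≤ s k := by
          split_ifs with h
          · simp
          · exact (hspos k).le
        linarith [hD, hd]
      · have hcross0 : (∑ j : Fin k, if (lollipop p k).Adj (Sum.inl i) (Sum.inr j)
              then s (k - (j : ℕ)) else 0) = 0 := by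
          refine Finset.sum_eq_zero fun j _ => ?_
          rw [if_neg]
          rw [lollipop_adj_lr]
          exact fun h => hi0 h.1
        rw [hsumL, hcross0, if_neg hi0, add_zero]
        have hb1 : (if (n1 : ℕ) = 0 then t else a) + (if (n2 : ℕ) = 0 then t else a)
            ≤ t + a := by
          by_cases h1 : (n1 : ℕ) = 0 <;> by_cases h2 : (n2 : ℕ) = 0
          · exact absurd (Fin.ext (h1.trans h2.symm)) hne12
          · simp [h1, h2]
          · simp only [if_neg h1, if_pos h2]
            linarith
          · simp only [if_neg h1, if_neg h2]
            linarith
        linarith [hB, hb1]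
    · -- path vertex
      have hjlt := j.isLt
      simp only [Sum.elim_inl, Sum.elim_inr]
      by_cases hj0 : (j : ℕ) = 0
      · have hcross : (∑ i : Fin p, if (lollipop p k).Adj (Sum.inr j) (Sum.inl i)
              then (if (i : ℕ) = 0 then t else a) else 0) = t := by
          have hpt : ∀ i : Fin p, (if (lollipop p k).Adj (Sum.inr j) (Sum.inl i)
                then (if (i : ℕ) = 0 then t else a) else 0)
              = (if (i : ℕ) = 0 then (if (i : ℕ) = 0 then t else a) else 0) := by
            intro i
            refine if_congr ?_ rfl rfl
            rw [lollipop_adj_rl]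
            simp [hj0]
          rw [Finset.sum_congr rfl (fun i _ => hpt i),
            sum_ite_val 0 (fun i : Fin p => if (i : ℕ) = 0 then t else a),
            dif_pos (show 0 < p by omega)]
          simp
        have hinr : (∑ j' : Fin k, if (lollipop p k).Adj (Sum.inr j) (Sum.inr j')
              then s (k - (j' : ℕ)) else 0) = if h : 1 < k then s (k - 1) else 0 := by
          have hpt : ∀ j' : Fin k, (if (lollipop p k).Adj (Sum.inr j) (Sum.inr j')
                then s (k - (j' : ℕ)) else 0)
              = (if (j' : ℕ) = 1 then s (k - (j' : ℕ)) else 0) := by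
            intro j'
            refine if_congr ?_ rfl rfl
            rw [lollipop_adj_rr]
            omega
          rw [Finset.sum_congr rfl (fun j' _ => hpt j'),
            sum_ite_val 1 (fun j' : Fin k => s (k - (j' : ℕ)))]
        rw [hcross, hinr, show k - (j : ℕ) = k by omega]
        have hp1 := hpath (k - 1)
        rw [show k - 1 + 2 = k + 1 by omega, show k - 1 + 1 = k by omega] at hp1
        have hd : (if h : 1 < k then s (k - 1) else 0) ≤ s (k - 1) := by
          split_ifs with h
          · exact le_refl _
          · exact (hspos _).le
        rw [htdef]
        linarith [hp1, hd]
      · have hcross0 : (∑ i : Fin p, if (lollipop p k).Adj (Sum.inr j) (Sum.inl i)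
              then (if (i : ℕ) = 0 then t else a) else 0) = 0 := by
          refine Finset.sum_eq_zero fun i _ => ?_
          rw [if_neg]
          rw [lollipop_adj_rl]
          exact fun h => hj0 h.2
        have hinr : (∑ j' : Fin k, if (lollipop p k).Adj (Sum.inr j) (Sum.inr j')
              then s (k - (j' : ℕ)) else 0)
            = (if h : (j : ℕ) + 1 < k then s (k - ((j : ℕ) + 1)) else 0)
              + (if h : (j : ℕ) - 1 < k then s (k - ((j : ℕ) - 1)) else 0) := by
          have hpt : ∀ j' : Fin k, (if (lollipop p k).Adj (Sum.inr j) (Sum.inr j')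
                then s (k - (j' : ℕ)) else 0)
              = (if (j' : ℕ) = (j : ℕ) + 1 then s (k - (j' : ℕ)) else 0)
                + (if (j' : ℕ) = (j : ℕ) - 1 then s (k - (j' : ℕ)) else 0) := by
            intro j'
            have hj' := j'.isLt
            rw [if_congr ((lollipop_adj_rr j j').trans
              (show ((j : ℕ) + 1 = (j' : ℕ) ∨ (j' : ℕ) + 1 = (j : ℕ))
                  ↔ ((j' : ℕ) = (j : ℕ) + 1 ∨ (j' : ℕ) = (j : ℕ) - 1) by omega)) rfl rfl]
            by_cases h1 : (j' : ℕ) = (j : ℕ) + 1 <;> by_cases h2 : (j' : ℕ) = (j : ℕ) - 1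
            · exfalso; omega
            · rw [if_pos (Or.inl h1), if_pos h1, if_neg h2, add_zero]
            · rw [if_pos (Or.inr h2), if_neg h1, if_pos h2, zero_add]
            · rw [if_neg (by tauto), if_neg h1, if_neg h2, add_zero]
          rw [Finset.sum_congr rfl (fun j' _ => hpt j'), Finset.sum_add_distrib,
            sum_ite_val ((j : ℕ) + 1) (fun j' : Fin k => s (k - (j' : ℕ))),
            sum_ite_val ((j : ℕ) - 1) (fun j' : Fin k => s (k - (j' : ℕ)))]
        rw [hcross0, hinr, zero_add, dif_pos (show (j : ℕ) - 1 < k by omega),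
          show k - ((j : ℕ) - 1) = (k - (j : ℕ)) + 1 by omega]
        have hp1 := hpath (k - (j : ℕ) - 1)
        rw [show k - (j : ℕ) - 1 + 2 = k - (j : ℕ) + 1 by omega,
          show k - (j : ℕ) - 1 + 1 = k - (j : ℕ) by omega] at hp1
        have hd1 : (if h : (j : ℕ) + 1 < k then s (k - ((j : ℕ) + 1)) else 0)
            ≤ s (k - (j : ℕ) - 1) := by
          split_ifs with h
          · rw [show k - ((j : ℕ) + 1) = k - (j : ℕ) - 1 by omega]
          · exact (hspos _).le
        linarith [hp1, hd1]

/-- For every `p ≥ 3` and `k ≥ 0`, the spectral radius (largest adjacency eigenvalue)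
of the lollipop `L(p,k)` is strictly less than `√5`. -/
theorem lollipop_spectral_radius_lt_sqrt_five (p k : ℕ) (hp : 3 ≤ p)
    (hA : (adjMat (lollipop p k)).IsHermitian) :
    (⨆ i, hA.eigenvalues i) < Real.sqrt 5 := by
  haveI : Nonempty (Fin p ⊕ Fin k) := ⟨Sum.inl ⟨0, by omega⟩⟩
  obtain ⟨w, hw, hsub⟩ := lollipop_subinvariant p k hp
  obtain ⟨i0, hi0⟩ := exists_eq_ciSup_of_finite (f := fun i => hA.eigenvalues i)
  rw [← hi0]
  apply eig_lt_of_subinvariant _ (fun v u => by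
    unfold adjMat; dsimp; split_ifs <;> norm_num) w hw _ hsub _
    (⇑(hA.eigenvectorBasis i0))
  · intro h
    exact hA.eigenvectorBasis.orthonormal.ne_zero i0 (by ext v; exact congrFun h v)
  · exact hA.mulVec_eigenvectorBasis i0
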